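/- arXiv:1307.7455 — 3 statements merged into one kernel-verified Lean document; each statement's English description precedes it below -/
import Mathlib

section
/- Let G be a finite group of order v with a bijection θ : G → G fixing the identity such that both θ and x ↦ x⁻¹θ(x) are bijections, and such that every cycle of θ on G \ {1} has length k. Define blocks B_g = {(g·g_{i1}, ..., g·g_{ik}) : i = 1,...,r} for g ∈ G, where (g_{i1},...,g_{ik}) are the cycles of θ. Then every ordered pair (x,y) of distinct elements of G occurs as a consecutive pair (i.e., y = g·θ(g⁻¹x) for the block through x) in exactly one block of ⋃_{g∈G} B_g. -/
/-! `(x, y)` is consecutive in the translate by `g` of a cycle through `h` exactly when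
`g = x h⁻¹` and `h⁻¹ θ(h) = x⁻¹ y`. As `h ↦ h⁻¹ θ(h)` is a bijection, `x⁻¹ y` determines `h`,
hence `g`; and `h ≠ 1` because `x⁻¹ y ≠ 1 = 1⁻¹ θ(1)`. -/

theorem consecutive_iff {G : Type*} [Group G] (θ : G → G) (x y g h : G) :
    x = g * h ∧ y = g * θ h ↔ g = x * h⁻¹ ∧ h⁻¹ * θ h = x⁻¹ * y := by
  constructor
  · rintro ⟨rfl, rfl⟩
    constructor <;> group
  · rintro ⟨rfl, hh⟩
    exact ⟨by group, by rw [mul_assoc, hh, mul_inv_cancel_left]⟩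

theorem stmt_6_general (G : Type*) [Group G]
    (θ : G → G) (hcan : θ 1 = 1)
    (hortho : Function.Bijective (fun x : G => x⁻¹ * θ x)) :
    ∀ x y : G, x ≠ y →
      ∃! p : G × G, p.2 ≠ 1 ∧ x = p.1 * p.2 ∧ y = p.1 * θ p.2 := by
  intro x y hxy
  obtain ⟨h, hh, huniq⟩ := hortho.existsUnique (x⁻¹ * y)
  have hne : h ≠ 1 := by
    rintro rfl
    exact hxy (inv_mul_eq_one.mp (by simpa [hcan] using hh.symm))
  refine ⟨(x * h⁻¹, h), ⟨hne, (consecutive_iff θ x y _ h).2 ⟨rfl, hh⟩⟩, ?_⟩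
  rintro ⟨g, h'⟩ ⟨-, hcons⟩
  obtain ⟨rfl, hh'⟩ := (consecutive_iff θ x y g h').1 hcons
  rw [huniq h' hh']

theorem stmt_6 (G : Type*) [Group G] [Finite G] (k : ℕ) (hk : 2 ≤ k)
    (θ : G → G) (hbij : Function.Bijective θ) (hcan : θ 1 = 1)
    (hortho : Function.Bijective (fun x : G => x⁻¹ * θ x))
    (hreg : ∀ x : G, x ≠ 1 → Set.ncard {y : G | ∃ j : ℕ, θ^[j] x = y} = k) :
    ∀ x y : G, x ≠ y →
      ∃! p : G × G, p.2 ≠ 1 ∧ x = p.1 * p.2 ∧ y = p.1 * θ p.2 :=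
  stmt_6_general G θ hcan hortho
end

section
/- Let v ≥ 7 be an integer all of whose prime factors are congruent to 1 modulo 6, and let a be a solution of x² − x + 1 ≡ 0 (mod v). Then [a] ∈ ℤ_v* has multiplicative order 6 and a^i − 1 is coprime to v for all 1 ≤ i ≤ 5. -/
/-!
Since `x² - x + 1` is the sixth cyclotomic polynomial, `a³ = -1` and `a⁶ = 1`. For `1 ≤ i ≤ 5`
the differences `aⁱ - 1` are `a²`, `a - 2`, `-2`, `-(a + 1)` and `-a`, and `(a + 1)(a - 2) = -3`;
so they are all units as soon as `2` and `3` are, which holds in `ℤ_v` because no prime factor of `v`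
is `2` or `3`. A unit is nonzero in a nontrivial ring, so no power `aⁱ` with `0 < i < 6` is `1`.
-/

section SixthRootOfUnity

variable {R : Type*} [CommRing R] {a : R}

theorem isUnit_of_sq_sub_self_add_one_eq_zero (ha : a ^ 2 - a + 1 = 0) : IsUnit a :=
  .of_mul_eq_one (1 - a) (by linear_combination -ha)

theorem pow_six_eq_one_of_sq_sub_self_add_one_eq_zero (ha : a ^ 2 - a + 1 = 0) : a ^ 6 = 1 := by
  linear_combination (a ^ 4 + a ^ 3 - a - 1) * ha

theorem isUnit_pow_sub_one_of_sq_sub_self_add_one_eq_zero (h2 : IsUnit (2 : R))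
    (h3 : IsUnit (3 : R)) (ha : a ^ 2 - a + 1 = 0) {i : ℕ} (hi₁ : 1 ≤ i) (hi₅ : i ≤ 5) :
    IsUnit (a ^ i - 1) := by
  have ha_unit := isUnit_of_sq_sub_self_add_one_eq_zero ha
  have h_prod : IsUnit ((a + 1) * (a - 2)) := by
    rw [show (a + 1) * (a - 2) = -3 by linear_combination ha]
    exact h3.neg
  interval_cases i
  · rw [show a ^ 1 - 1 = a * a by linear_combination -ha]
    exact ha_unit.mul ha_unit
  · rw [show a ^ 2 - 1 = a - 2 by linear_combination ha]
    exact isUnit_of_mul_isUnit_right h_prod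
  · rw [show a ^ 3 - 1 = -2 by linear_combination (a + 1) * ha]
    exact h2.neg
  · rw [show a ^ 4 - 1 = -(a + 1) by linear_combination (a ^ 2 + a) * ha]
    exact (isUnit_of_mul_isUnit_left h_prod).neg
  · rw [show a ^ 5 - 1 = -a by linear_combination (a ^ 3 + a ^ 2 - 1) * ha]
    exact ha_unit.neg

theorem orderOf_eq_six_of_sq_sub_self_add_one_eq_zero [Nontrivial R] (h2 : IsUnit (2 : R))
    (h3 : IsUnit (3 : R)) (ha : a ^ 2 - a + 1 = 0) : orderOf a = 6 := by
  refine (orderOf_eq_iff (by norm_num)).2 ⟨pow_six_eq_one_of_sq_sub_self_add_one_eq_zero ha, ?_⟩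
  intro m hm₆ hm₀ ham
  have := isUnit_pow_sub_one_of_sq_sub_self_add_one_eq_zero h2 h3 ha hm₀ (by omega)
  simp [ham] at this

end SixthRootOfUnity

theorem stmt_14 (v : ℕ) (hv : 7 ≤ v)
    (hp : ∀ p : ℕ, p.Prime → p ∣ v → p % 6 = 1)
    (a : ZMod v) (ha : a ^ 2 - a + 1 = 0) :
    orderOf a = 6 ∧ (∀ i : ℕ, 1 ≤ i → i ≤ 5 → IsUnit (a ^ i - 1)) := by
  have : Nontrivial (ZMod v) := ZMod.nontrivial_iff.2 (by omega)
  have isUnit_prime : ∀ p : ℕ, p.Prime → p % 6 ≠ 1 → IsUnit (p : ZMod v) :=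
    fun p hp_prime hp_mod => ZMod.isUnit_prime_of_not_dvd hp_prime (hp_mod ∘ hp p hp_prime)
  have h2 : IsUnit (2 : ZMod v) := by exact_mod_cast isUnit_prime 2 Nat.prime_two (by norm_num)
  have h3 : IsUnit (3 : ZMod v) := by exact_mod_cast isUnit_prime 3 Nat.prime_three (by norm_num)
  exact ⟨orderOf_eq_six_of_sq_sub_self_add_one_eq_zero h2 h3 ha,
    fun _ hi₁ hi₅ => isUnit_pow_sub_one_of_sq_sub_self_add_one_eq_zero h2 h3 ha hi₁ hi₅⟩
end

section
/- Let K be a finite group of order v admitting a fixed-point-free automorphism φ of prime order k. Then k divides v − 1, and the set of blocks {(gx, gφ(x), gφ²(x), ..., gφ^{k−1}(x)) : g ∈ K, x a representative of a ⟨φ⟩-orbit on K \ {1}} has the property that for every t with 1 ≤ t ≤ k−1, every ordered pair (u, w) of distinct elements of K appears t-apart in exactly one block (i.e., there are unique g, x, j with u = gφ^j(x) and w = gφ^{j+t}(x)). -/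
/-!
The cyclic group `⟨φ⟩` has prime order `k` and acts on `K` with the single fixed point `1`, so
`|K| ≡ 1 [MOD k]`. For `0 < t < k` the power `φ ^ t` generates `⟨φ⟩`, hence is again
fixed-point-free, and then `x ↦ x⁻¹ * (φ ^ t) x` is injective, so bijective on the finite group
`K`. The pair `(g, x)` is therefore forced: `x` by `x⁻¹ * (φ ^ t) x = u⁻¹ * w`, and `g = u * x⁻¹`.
-/

namespace MonoidHom.FixedPointFree

variable {K : Type*} [Group K]

theorem pow_of_coprime {φ : MulAut K} (hφ : FixedPointFree φ) {t : ℕ}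
    (ht : t.Coprime (orderOf φ)) : FixedPointFree ⇑(φ ^ t) := by
  intro x hx
  obtain ⟨m, hm⟩ := exists_pow_eq_self_of_coprime ht
  have hfix : ∀ n : ℕ, ((φ ^ t) ^ n) x = x := fun n => by
    induction n with
    | zero => rfl
    | succ n ih => rw [pow_succ, MulAut.mul_apply, hx, ih]
  exact hφ x (hm ▸ hfix m)

theorem fixedPoints_zpowers_eq_singleton_one {φ : MulAut K} (hφ : FixedPointFree φ) :
    MulAction.fixedPoints (Subgroup.zpowers φ) K = {1} := by
  ext x
  refine ⟨fun hx => hφ x (hx ⟨φ, Subgroup.mem_zpowers φ⟩), ?_⟩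
  rintro rfl g
  exact map_one g.1

theorem dvd_card_sub_one [Finite K] {φ : MulAut K} (hφ : FixedPointFree φ) {p n : ℕ}
    [Fact p.Prime] (hord : orderOf φ = p ^ n) : p ∣ Nat.card K - 1 := by
  have hpg : IsPGroup p (Subgroup.zpowers φ) := IsPGroup.of_card (by rw [Nat.card_zpowers, hord])
  have hmod := hpg.card_modEq_card_fixedPoints K
  rw [hφ.fixedPoints_zpowers_eq_singleton_one, Nat.card_coe_set_eq, Set.ncard_singleton] at hmod
  exact (Nat.modEq_iff_dvd' Nat.card_pos).mp hmod.symm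

variable {F : Type*} [FunLike F K K] [MonoidHomClass F K K] {ψ : F}

theorem bijective_mul_mul_apply [Finite K] (hψ : FixedPointFree ψ) :
    Function.Bijective fun p : K × K => (p.1 * p.2, p.1 * ψ p.2) := by
  refine Finite.injective_iff_bijective.mp ?_
  rintro ⟨g, x⟩ ⟨g', x'⟩ h
  obtain ⟨hu, hw⟩ := Prod.mk.inj h
  dsimp only at hu hw
  have hx : x = x' := by
    refine inv_injective (hψ.commutatorMap_injective ?_)
    simp only [commutatorMap_apply, map_inv, div_inv_eq_mul]
    calc x⁻¹ * ψ x = (g * x)⁻¹ * (g * ψ x) := by group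
      _ = (g' * x')⁻¹ * (g' * ψ x') := by rw [hu, hw]
      _ = x'⁻¹ * ψ x' := by group
  subst hx
  rw [mul_right_cancel hu]

theorem existsUnique_mul_mul_apply [Finite K] (hψ : FixedPointFree ψ) (u w : K) :
    ∃! p : K × K, u = p.1 * p.2 ∧ w = p.1 * ψ p.2 := by
  simpa [Prod.ext_iff, eq_comm] using hψ.bijective_mul_mul_apply.existsUnique (u, w)

end MonoidHom.FixedPointFree

open MonoidHom

theorem stmt_19 (K : Type*) [Group K] [Finite K] (φ : MulAut K) (k : ℕ)
    (hkp : k.Prime) (hord : orderOf φ = k)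
    (hfpf : ∀ x : K, φ x = x → x = 1) :
    k ∣ Nat.card K - 1 ∧
    ∀ t : ℕ, 1 ≤ t → t ≤ k - 1 → ∀ u w : K, u ≠ w →
      ∃! p : K × K, p.2 ≠ 1 ∧ u = p.1 * p.2 ∧ w = p.1 * (φ ^ t) p.2 := by
  have : Fact k.Prime := ⟨hkp⟩
  have hφ : FixedPointFree φ := hfpf
  refine ⟨hφ.dvd_card_sub_one (n := 1) (by rw [hord, pow_one]), fun t ht1 htk u w huw => ?_⟩
  have hcop : t.Coprime (orderOf φ) := by
    rw [hord, Nat.coprime_comm, hkp.coprime_iff_not_dvd]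
    exact Nat.not_dvd_of_pos_of_lt ht1 (by omega)
  obtain ⟨p, hp, hp_unique⟩ := (hφ.pow_of_coprime hcop).existsUnique_mul_mul_apply u w
  have hp2 : p.2 ≠ 1 := fun h1 => huw (by rw [hp.1, hp.2, h1, map_one])
  exact ⟨p, ⟨hp2, hp⟩, fun q hq => hp_unique q hq.2⟩
end
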